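/- arXiv:2504.21125 — 2 statements merged into one kernel-verified Lean document; each statement's English description precedes it below -/
import Mathlib

section
/- Let T be a triangulated category and S a full subcategory. Define ⟨S⟩₀ = add(0), ⟨S⟩₁ = add(S) (closure under shifts, finite coproducts, retracts), and inductively ⟨S⟩ₙ = add{cone(φ) : φ a morphism from an object of ⟨S⟩ₙ₋₁ to an object of ⟨S⟩₁}. Then the subcategories form an increasing chain ⟨S⟩₀ ⊆ ⟨S⟩₁ ⊆ ⟨S⟩₂ ⊆ ⋯ whose union equals ⟨S⟩, the smallest thick subcategory of T containing S. -/
open CategoryTheory Limits Pretriangulated Opposite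

universe w v u

namespace Paper

variable {C : Type u} [Category.{v} C] [Preadditive C] [HasZeroObject C]
  [HasShift C ℤ] [∀ n : ℤ, (shiftFunctor C n).Additive] [Pretriangulated C]
  [HasBinaryBiproducts C]

/-- `add S`: smallest strictly full subcategory containing `S` closed under shifts,
finite coproducts and retracts. -/
inductive addClosure (S : Set C) : C → Prop
  | of {X : C} (h : X ∈ S) : addClosure S X
  | zero {X : C} (h : IsZero X) : addClosure S X
  | iso {X Y : C} (e : X ≅ Y) (h : addClosure S X) : addClosure S Y
  | shift {X : C} (n : ℤ) (h : addClosure S X) : addClosure S (X⟦n⟧)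
  | biprod {X Y : C} (hX : addClosure S X) (hY : addClosure S Y) : addClosure S (X ⊞ Y)
  | retract {X Y : C} (i : X ⟶ Y) (r : Y ⟶ X) (hir : i ≫ r = 𝟙 X) (h : addClosure S Y) :
      addClosure S X

/-- objects arising as the cone of a morphism from an object of `A` to an object of `B`,
i.e. `E` with a distinguished triangle `X → Y → E → X[1]`, `X ∈ A`, `Y ∈ B`. -/
def coneSet (A B : Set C) : Set C :=
  {E | ∃ (X Y : C) (f : X ⟶ Y) (g : Y ⟶ E) (h : E ⟶ X⟦(1:ℤ)⟧),
      Triangle.mk f g h ∈ (distTriang C) ∧ X ∈ A ∧ Y ∈ B}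

/-- The level filtration `⟨S⟩ₙ`. -/
def level (S : Set C) : ℕ → Set C
  | 0 => addClosure (∅ : Set C)
  | 1 => addClosure S
  | (n+2) => addClosure (coneSet (level S (n+1)) (addClosure S))

/-- A thick subcategory: triangulated subcategory closed under retracts. -/
structure IsThick (S : Set C) : Prop where
  zero : ∀ X : C, IsZero X → X ∈ S
  iso : ∀ {X Y : C}, (X ≅ Y) → X ∈ S → Y ∈ S
  shift : ∀ (X : C) (n : ℤ), X ∈ S → X⟦n⟧ ∈ S
  ext₂ : ∀ T : Triangle C, T ∈ (distTriang C) → T.obj₁ ∈ S → T.obj₃ ∈ S → T.obj₂ ∈ S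
  retract : ∀ {X Y : C} (i : X ⟶ Y) (r : Y ⟶ X), i ≫ r = 𝟙 X → Y ∈ S → X ∈ S

/-- `⟨S⟩`, the smallest thick subcategory of `C` containing `S`. -/
def thickClosure (S : Set C) : Set C :=
  {X | ∀ T : Set C, IsThick T → S ⊆ T → X ∈ T}

end Paper

/-!
The levels are add-closed and increase, since every `Y ∈ add S` is the cone of `0 ⟶ Y`; as cones
are extensions, they lie in every thick subcategory containing `S`. For the converse it suffices
that the union `U` of the levels is closed under extensions. Call `A` absorbing if every extension
of an object of `U` by `A` lies in `U`. Objects of `add S` are absorbing by the very definition of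
the levels, and absorbing objects are stable under isomorphisms, shifts, retracts and extensions,
so every object of `U` is absorbing.

Stability under extensions would follow from the octahedral axiom, which a pretriangulated
category need not satisfy. It is replaced by a weak octahedron for a split projection
`w ≫ fst : P ⟶ A₁ ⊞ A₂ ⟶ A₁`: the cone `Z` of `A₂ ⟶ cone w` and the cone `Y₁` of `w ≫ fst` are
retracts of `Y₁ ⊞ A₂⟦1⟧` and `Z ⊞ P⟦1⟧` respectively, which suffices as `U` is closed under finite
sums and retracts.
-/

namespace Paper

open CategoryTheory.Category ZeroObject

variable {C : Type u} [Category.{v} C] [Preadditive C] [HasShift C ℤ]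

section

variable [HasBinaryBiproducts C]

lemma addClosure_mono {S T : Set C} (h : S ⊆ T) {X : C} (hX : addClosure S X) :
    addClosure T X := by
  induction hX with
  | of hX => exact .of (h hX)
  | zero hX => exact .zero hX
  | iso e _ ih => exact .iso e ih
  | shift n _ ih => exact .shift n ih
  | biprod _ _ ihX ihY => exact .biprod ihX ihY
  | retract i r hir _ ih => exact .retract i r hir ih

def IsAddClosed (U : Set C) : Prop := ∀ ⦃X : C⦄, addClosure U X → X ∈ U

lemma isAddClosed_addClosure (G : Set C) : IsAddClosed (addClosure G) := by
  intro X hX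
  induction hX with
  | of hX => exact hX
  | zero hX => exact .zero hX
  | iso e _ ih => exact .iso e ih
  | shift n _ ih => exact .shift n ih
  | biprod _ _ ihX ihY => exact .biprod ihX ihY
  | retract i r hir _ ih => exact .retract i r hir ih

namespace IsAddClosed

variable {U : Set C} (hU : IsAddClosed U)
include hU

lemma addClosure_subset {G : Set C} (hG : G ⊆ U) {X : C} (hX : addClosure G X) : X ∈ U :=
  hU (addClosure_mono hG hX)

lemma zero_mem {X : C} (hX : IsZero X) : X ∈ U := hU (.zero hX)

lemma mem_of_iso {X Y : C} (e : X ≅ Y) (hX : X ∈ U) : Y ∈ U := hU (.iso e (.of hX))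

lemma shift_mem {X : C} (n : ℤ) (hX : X ∈ U) : X⟦n⟧ ∈ U := hU (.shift n (.of hX))

lemma biprod_mem {X Y : C} (hX : X ∈ U) (hY : Y ∈ U) : (X ⊞ Y) ∈ U :=
  hU (.biprod (.of hX) (.of hY))

lemma mem_of_retract {X Y : C} (r : Retract X Y) (hY : Y ∈ U) : X ∈ U :=
  hU (.retract r.i r.r r.retract (.of hY))

end IsAddClosed

lemma isAddClosed_iUnion_of_monotone {U : ℕ → Set C} (hmono : Monotone U)
    (hU : ∀ n, IsAddClosed (U n)) : IsAddClosed (⋃ n, U n) := by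
  intro X hX
  rw [Set.mem_iUnion]
  induction hX with
  | of hX => exact Set.mem_iUnion.1 hX
  | zero hX => exact ⟨0, (hU 0).zero_mem hX⟩
  | iso e _ ih =>
    obtain ⟨n, hn⟩ := ih
    exact ⟨n, (hU n).mem_of_iso e hn⟩
  | shift m _ ih =>
    obtain ⟨n, hn⟩ := ih
    exact ⟨n, (hU n).shift_mem m hn⟩
  | biprod _ _ ihX ihY =>
    obtain ⟨m, hm⟩ := ihX
    obtain ⟨n, hn⟩ := ihY
    exact ⟨max m n, (hU _).biprod_mem (hmono (le_max_left m n) hm) (hmono (le_max_right m n) hn)⟩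
  | retract i r hir _ ih =>
    obtain ⟨n, hn⟩ := ih
    exact ⟨n, (hU n).mem_of_retract ⟨i, r, hir⟩ hn⟩

noncomputable def biprodIsoPi (F : WalkingPair → C) [HasProduct F] :
    F .left ⊞ F .right ≅ ∏ᶜ F where
  hom := Pi.lift fun j => match j with
    | .left => biprod.fst
    | .right => biprod.snd
  inv := biprod.lift (Pi.π F .left) (Pi.π F .right)
  hom_inv_id := by apply biprod.hom_ext <;> simp
  inv_hom_id := by
    apply Pi.hom_ext
    rintro (_ | _) <;> simp

end

variable [HasZeroObject C] [∀ n : ℤ, (shiftFunctor C n).Additive] [Pretriangulated C]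

/-- Unlike `Triangle.isoMk`, the side conditions are stated on the morphisms themselves rather
than on projections of `Triangle.mk`, so that `simp` can prove them. -/
lemma distinguished_of_isos {X Y Z X' Y' Z' : C} {f : X ⟶ Y} {g : Y ⟶ Z} {h : Z ⟶ X⟦(1 : ℤ)⟧}
    {f' : X' ⟶ Y'} {g' : Y' ⟶ Z'} {h' : Z' ⟶ X'⟦(1 : ℤ)⟧} (hT : Triangle.mk f g h ∈ distTriang C)
    (e₁ : X' ≅ X) (e₂ : Y' ≅ Y) (e₃ : Z' ≅ Z) (c₁ : f' ≫ e₂.hom = e₁.hom ≫ f)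
    (c₂ : g' ≫ e₃.hom = e₂.hom ≫ g) (c₃ : h' ≫ e₁.hom⟦(1 : ℤ)⟧' = e₃.hom ≫ h) :
    Triangle.mk f' g' h' ∈ distTriang C :=
  isomorphic_distinguished _ hT _ (Triangle.isoMk _ _ e₁ e₂ e₃ c₁ c₂ c₃)

section Cone

def IsCone {X Y : C} (f : X ⟶ Y) (Z : C) : Prop :=
  ∃ (g : Y ⟶ Z) (h : Z ⟶ X⟦(1 : ℤ)⟧), Triangle.mk f g h ∈ distTriang C

lemma exists_isCone {X Y : C} (f : X ⟶ Y) : ∃ Z, IsCone f Z :=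
  let ⟨Z, g, h, hT⟩ := distinguished_cocone_triangle f
  ⟨Z, g, h, hT⟩

lemma isCone_id (X : C) : IsCone (𝟙 X) 0 := ⟨0, 0, contractible_distinguished X⟩

variable {X Y Z : C} {f : X ⟶ Y}

lemma IsCone.of_iso (hf : IsCone f Z) {Z' : C} (e : Z ≅ Z') : IsCone f Z' :=
  let ⟨g, h, hT⟩ := hf
  ⟨g ≫ e.hom, e.inv ≫ h,
    distinguished_of_isos hT (Iso.refl _) (Iso.refl _) e.symm (by simp) (by simp) (by simp)⟩

lemma IsCone.of_arrowIso (hf : IsCone f Z) {X' Y' : C} (e₁ : X ≅ X') (e₂ : Y ≅ Y')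
    (f' : X' ⟶ Y') (w : e₁.hom ≫ f' = f ≫ e₂.hom) : IsCone f' Z :=
  let ⟨g, h, hT⟩ := hf
  ⟨e₂.inv ≫ g, h ≫ e₁.hom⟦(1 : ℤ)⟧', distinguished_of_isos hT e₁.symm e₂.symm (Iso.refl _)
    (by rw [Iso.symm_hom, Iso.symm_hom, Iso.comp_inv_eq, assoc, ← w, Iso.inv_hom_id_assoc])
    (by simp) (by simp [← Functor.map_comp])⟩

lemma IsCone.rotate (hf : IsCone f Z) : ∃ g : Y ⟶ Z, IsCone g (X⟦(1 : ℤ)⟧) :=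
  let ⟨g, h, hT⟩ := hf
  ⟨g, h, _, rot_of_distTriang _ hT⟩

lemma IsCone.invRotate (hf : IsCone f Z) : ∃ u : Z⟦(-1 : ℤ)⟧ ⟶ X, IsCone u Y :=
  let ⟨_, _, hT⟩ := hf
  ⟨_, _, _, inv_rot_of_distTriang _ hT⟩

lemma IsCone.shift (hf : IsCone f Z) (n : ℤ) : ∃ f' : X⟦n⟧ ⟶ Y⟦n⟧, IsCone f' (Z⟦n⟧) :=
  let ⟨_, _, hT⟩ := hf
  ⟨_, _, _, Triangle.shift_distinguished _ hT n⟩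

lemma IsCone.exists_of_retract (hf : IsCone f Z) {X' : C} (r : Retract X X') :
    ∃ (Y' : C) (f' : X' ⟶ Y'), IsCone f' Z ∧ Nonempty (Retract Y Y') := by
  obtain ⟨g, h, hT⟩ := hf
  obtain ⟨Y', ⟨_, _, f', g', h', hT', hX', hZ'⟩, hr⟩ :=
    ObjectProperty.extensionProduct_retractClosure_retractClosure_le (.singleton X')
      (.singleton Z) Y ⟨X, Z, f, g, h, hT, ⟨X', (ObjectProperty.singleton_iff _ _).2 rfl, ⟨r⟩⟩,
        ⟨Z, (ObjectProperty.singleton_iff _ _).2 rfl, ⟨Retract.refl Z⟩⟩⟩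
  obtain rfl := (ObjectProperty.singleton_iff _ _).1 hX'
  obtain rfl := (ObjectProperty.singleton_iff _ _).1 hZ'
  exact ⟨Y', f', ⟨g', h', hT'⟩, hr⟩

end Cone

section Absorbs

def AbsorbsExtensionsBy (U : Set C) (A : C) : Prop :=
  ∀ ⦃Y B : C⦄ (f : A ⟶ Y), IsCone f B → B ∈ U → Y ∈ U

variable {U : Set C} {A A' : C}

lemma AbsorbsExtensionsBy.of_iso (hA : AbsorbsExtensionsBy U A) (e : A ≅ A') :
    AbsorbsExtensionsBy U A' :=
  fun _ _ f hf hB => hA (e.hom ≫ f) (hf.of_arrowIso e.symm (Iso.refl _) _ (by simp)) hB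

end Absorbs

lemma coneSet_mono_left {A A' B : Set C} (h : A ⊆ A') : coneSet A B ⊆ coneSet A' B :=
  fun _ ⟨X, Y, f, g, k, hT, hX, hY⟩ => ⟨X, Y, f, g, k, hT, h hX, hY⟩

variable [HasBinaryBiproducts C]

lemma IsThick.isAddClosed {T : Set C} (hT : IsThick T) : IsAddClosed T := by
  intro X hX
  induction hX with
  | of hX => exact hX
  | zero hX => exact hT.zero _ hX
  | iso e _ ih => exact hT.iso e ih
  | shift n _ ih => exact hT.shift _ n ih
  | biprod _ _ ihX ihY => exact hT.ext₂ _ (binaryBiproductTriangle_distinguished _ _) ihX ihY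
  | retract i r hir _ ih => exact hT.retract i r hir ih

section Level

variable (S : Set C)

lemma isAddClosed_level : ∀ n, IsAddClosed (level S n)
  | 0 | 1 | _ + 2 => isAddClosed_addClosure _

lemma level_subset_level_succ : ∀ n : ℕ, level S n ⊆ level S (n + 1)
  | 0 => fun _ => addClosure_mono (Set.empty_subset S)
  | 1 => fun _ => addClosure_mono (T := coneSet (level S 1) (addClosure S)) fun Y hY =>
      ⟨0, Y, 0, 𝟙 Y, 0, contractible_distinguished₁ Y,
        (isAddClosed_level S 1).zero_mem (isZero_zero C), .of hY⟩
  | n + 2 => fun _ => addClosure_mono (coneSet_mono_left (level_subset_level_succ (n + 1)))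

lemma monotone_level : Monotone (level S) := monotone_nat_of_le_succ (level_subset_level_succ S)

lemma isAddClosed_iUnion_level : IsAddClosed (⋃ n, level S n) :=
  isAddClosed_iUnion_of_monotone (monotone_level S) (isAddClosed_level S)

variable {S} in
lemma level_subset_of_isThick {T : Set C} (hT : IsThick T) (hST : S ⊆ T) :
    ∀ n, level S n ⊆ T
  | 0 => fun _ => hT.isAddClosed.addClosure_subset (Set.empty_subset T)
  | 1 => fun _ => hT.isAddClosed.addClosure_subset hST
  | n + 2 => fun _ => hT.isAddClosed.addClosure_subset (G := coneSet _ _)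
      fun _ ⟨_, _, _, _, _, hT', hX, hY⟩ =>
      hT.ext₂ _ (rot_of_distTriang _ hT') (hT.isAddClosed.addClosure_subset hST hY)
        (hT.shift _ 1 (level_subset_of_isThick hT hST (n + 1) hX))

lemma iUnion_level_subset_thickClosure : ⋃ n, level S n ⊆ thickClosure S :=
  fun _ hX _ hT hST => Set.iUnion_subset (level_subset_of_isThick hT hST) hX

end Level

section Shear

variable {X Y Z : C} {f : X ⟶ Y}

lemma isCone_biprod_map_mor₁ (T₁ T₂ : Triangle C) (h₁ : T₁ ∈ distTriang C)
    (h₂ : T₂ ∈ distTriang C) : IsCone (biprod.map T₁.mor₁ T₂.mor₁) (T₁.obj₃ ⊞ T₂.obj₃) := by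
  let T : WalkingPair → Triangle C
    | .left => T₁
    | .right => T₂
  have hP : IsCone (Limits.Pi.map fun j => (T j).mor₁) (∏ᶜ fun j => (T j).obj₃) :=
    ⟨Limits.Pi.map fun j => (T j).mor₂, _,
      productTriangle_distinguished T (by rintro (_ | _) <;> assumption)⟩
  refine (hP.of_iso (biprodIsoPi _).symm).of_arrowIso (biprodIsoPi _).symm
    (biprodIsoPi _).symm (biprod.map (T .left).mor₁ (T .right).mor₁) ?_
  apply biprod.hom_ext <;> simp [biprodIsoPi]

lemma IsCone.biprod_map {X' Y' Z' : C} {f' : X' ⟶ Y'} (hf : IsCone f Z) (hf' : IsCone f' Z') :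
    IsCone (biprod.map f f') (Z ⊞ Z') :=
  let ⟨g, h, hT⟩ := hf
  let ⟨g', h', hT'⟩ := hf'
  isCone_biprod_map_mor₁ (Triangle.mk f g h) (Triangle.mk f' g' h') hT hT'

lemma IsCone.lift_desc_snd (hf : IsCone f Z) {W : C} (v : W ⟶ Y) :
    IsCone (biprod.lift (biprod.desc f v) biprod.snd : X ⊞ W ⟶ Y ⊞ W) Z :=
  ((hf.biprod_map (isCone_id W)).of_iso (isoBiprodZero (isZero_zero C)).symm).of_arrowIso
    (Iso.refl _) (Biprod.unipotentLower v) _ (by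
      apply biprod.hom_ext' <;> apply biprod.hom_ext <;> simp [Biprod.ofComponents])

lemma IsCone.lift_desc_fst (hf : IsCone f Z) {W : C} (u : W ⟶ Y) :
    IsCone (biprod.lift (biprod.desc u f) biprod.fst : W ⊞ X ⟶ Y ⊞ W) Z :=
  (hf.lift_desc_snd u).of_arrowIso (biprod.braiding X W) (Iso.refl _) _ (by
    apply biprod.hom_ext' <;> apply biprod.hom_ext <;> simp)

end Shear

section WeakOctahedron

open Preadditive

lemma nonempty_retract_of_comp_eq {X Y Z W : C} {f : X ⟶ Y} {g : Y ⟶ Z} {h : Z ⟶ X⟦(1 : ℤ)⟧}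
    (hT : Triangle.mk f g h ∈ distTriang C) (θ : Z ⟶ W) (η : W ⟶ Z) (hθη : g ≫ θ ≫ η = g) :
    Nonempty (Retract Z (W ⊞ X⟦(1 : ℤ)⟧)) := by
  obtain ⟨ψ, hψ⟩ : ∃ ψ : X⟦(1 : ℤ)⟧ ⟶ Z, 𝟙 Z - θ ≫ η = h ≫ ψ :=
    Triangle.yoneda_exact₃ _ hT _ (by
      change g ≫ (𝟙 Z - θ ≫ η) = 0
      rw [comp_sub, comp_id, hθη, sub_self])
  exact ⟨⟨biprod.lift θ h, biprod.desc η ψ, by rw [biprod.lift_desc, ← hψ, add_sub_cancel]⟩⟩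

lemma exists_comp_eq_of_distTriang_fst {P A₁ A₂ Y₀ Y₁ Z : C} {w : P ⟶ A₁ ⊞ A₂}
    {f₀ : A₁ ⊞ A₂ ⟶ Y₀} {k₀ : Y₀ ⟶ P⟦(1 : ℤ)⟧} {j₁ : A₁ ⟶ Y₁} {k₁ : Y₁ ⟶ P⟦(1 : ℤ)⟧}
    {q : Y₀ ⟶ Z} {δ : Z ⟶ A₂⟦(1 : ℤ)⟧}
    (hT₀ : Triangle.mk w f₀ k₀ ∈ distTriang C)
    (hT₁ : Triangle.mk (w ≫ biprod.fst) j₁ k₁ ∈ distTriang C)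
    (hTq : Triangle.mk (biprod.inr ≫ f₀) q δ ∈ distTriang C) :
    ∃ (θ : Z ⟶ Y₁) (η : Y₁ ⟶ Z), q ≫ θ ≫ η = q ∧ j₁ ≫ η ≫ θ = j₁ := by
  -- The octahedral axiom would give `Z ≅ Y₁`. Here `θ` comes from the comparison `φ : Y₀ ⟶ Y₁`
  -- over `fst`, and `η` from `inl ≫ f₀ ≫ q`, corrected by a map factoring through `k₁`.
  have hwf₀ : w ≫ f₀ = 0 := comp_distTriang_mor_zero₁₂ _ hT₀
  have hj₁k₁ : j₁ ≫ k₁ = 0 := comp_distTriang_mor_zero₂₃ _ hT₁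
  have hinrq : biprod.inr ≫ f₀ ≫ q = 0 := by
    rw [← assoc]
    exact comp_distTriang_mor_zero₁₂ _ hTq
  have hsplit : biprod.fst ≫ biprod.inl ≫ f₀ ≫ q = f₀ ≫ q := by
    conv_rhs => rw [← id_comp (f₀ ≫ q), ← biprod.total]
    rw [add_comp, assoc, assoc, hinrq, comp_zero, add_zero]
  obtain ⟨φ, hφ₁, hφ₂⟩ : ∃ φ : Y₀ ⟶ Y₁, f₀ ≫ φ = biprod.fst ≫ j₁ ∧
      k₀ ≫ (𝟙 P)⟦(1 : ℤ)⟧' = φ ≫ k₁ :=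
    complete_distinguished_triangle_morphism _ _ hT₀ hT₁ (𝟙 P) biprod.fst (id_comp _).symm
  rw [CategoryTheory.Functor.map_id, comp_id] at hφ₂
  obtain ⟨θ, hθ⟩ : ∃ θ : Z ⟶ Y₁, φ = q ≫ θ := Triangle.yoneda_exact₂ _ hTq φ (by
    change (biprod.inr ≫ f₀) ≫ φ = 0
    rw [assoc, hφ₁, biprod.inr_fst_assoc, zero_comp])
  obtain ⟨η, hη⟩ : ∃ η : Y₁ ⟶ Z, biprod.inl ≫ f₀ ≫ q = j₁ ≫ η :=
    Triangle.yoneda_exact₂ _ hT₁ _ (by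
      change (w ≫ biprod.fst) ≫ biprod.inl ≫ f₀ ≫ q = 0
      rw [assoc, hsplit, reassoc_of% hwf₀, zero_comp])
  obtain ⟨π, hπ⟩ : ∃ π : P⟦(1 : ℤ)⟧ ⟶ Z, φ ≫ η - q = k₀ ≫ π :=
    Triangle.yoneda_exact₃ _ hT₀ _ (by
      change f₀ ≫ (φ ≫ η - q) = 0
      rw [comp_sub, reassoc_of% hφ₁, ← hη, hsplit, sub_self])
  refine ⟨θ, η - k₁ ≫ π, ?_, ?_⟩
  · rw [← assoc, ← hθ, comp_sub, ← reassoc_of% hφ₂, ← hπ, sub_sub_cancel]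
  · rw [sub_comp, comp_sub, assoc, reassoc_of% hj₁k₁, zero_comp, sub_zero, ← reassoc_of% hη, ← hθ,
      hφ₁, biprod.inl_fst_assoc]

lemma IsCone.exists_isCone_retracts {P A₁ A₂ Y₀ Y₁ : C} {w : P ⟶ A₁ ⊞ A₂}
    (h₀ : IsCone w Y₀) (h₁ : IsCone (w ≫ biprod.fst) Y₁) :
    ∃ (Z : C) (g : A₂ ⟶ Y₀), IsCone g Z ∧ Nonempty (Retract Z (Y₁ ⊞ A₂⟦(1 : ℤ)⟧)) ∧
      Nonempty (Retract Y₁ (Z ⊞ P⟦(1 : ℤ)⟧)) := by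
  obtain ⟨f₀, k₀, hT₀⟩ := h₀
  obtain ⟨j₁, k₁, hT₁⟩ := h₁
  obtain ⟨Z, q, δ, hTq⟩ := distinguished_cocone_triangle (biprod.inr ≫ f₀)
  obtain ⟨θ, η, hq, hj⟩ := exists_comp_eq_of_distTriang_fst hT₀ hT₁ hTq
  exact ⟨Z, _, ⟨q, δ, hTq⟩, nonempty_retract_of_comp_eq hTq θ η hq,
    nonempty_retract_of_comp_eq hT₁ η θ hj⟩

end WeakOctahedron

namespace AbsorbsExtensionsBy

variable {U : Set C} {A A' : C} (hU : IsAddClosed U)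
include hU

lemma mem (hA : AbsorbsExtensionsBy U A) : A ∈ U :=
  hA (𝟙 A) (isCone_id A) (hU.zero_mem (isZero_zero C))

lemma shift (hA : AbsorbsExtensionsBy U A) (n : ℤ) :
    AbsorbsExtensionsBy U (A⟦n⟧) := by
  intro Y B f hf hB
  obtain ⟨f', hf'⟩ := hf.shift (-n)
  have hY : Y⟦-n⟧ ∈ U :=
    hA.of_iso ((shiftFunctorCompIsoId C n (-n) (add_neg_cancel n)).symm.app A) f' hf'
      (hU.shift_mem _ hB)
  exact hU.mem_of_iso ((shiftFunctorCompIsoId C (-n) n (neg_add_cancel n)).app Y)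
    (hU.shift_mem n hY)

lemma of_retract (hA' : AbsorbsExtensionsBy U A') (r : Retract A A') :
    AbsorbsExtensionsBy U A := by
  intro Y B f hf hB
  obtain ⟨Y', f', hf', ⟨r'⟩⟩ := hf.exists_of_retract r
  exact hU.mem_of_retract r' (hA' f' hf' hB)

lemma of_isCone {N₁ N₂ N₃ : C} {a : N₁ ⟶ N₂} (ha : IsCone a N₃)
    (h₁ : AbsorbsExtensionsBy U N₁) (h₃ : AbsorbsExtensionsBy U N₃) :
    AbsorbsExtensionsBy U N₂ := by
  -- `Y` is a cone of `u : P ⟶ N₂` with `P = B⟦-1⟧`. Shearing exhibits both `Y` and `N₃` as cones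
  -- of maps out of `P ⊞ N₁` with first component `(u, a)`, whose cone `D` the weak octahedron
  -- then relates to a cone `Z'` of some `P ⟶ N₃` and to a cone `Z` of some `N₁ ⟶ Y`.
  intro Y B f hf hB
  obtain ⟨u, hu⟩ := hf.invRotate
  have hP : B⟦(-1 : ℤ)⟧ ∈ U := hU.shift_mem _ hB
  have hN₁ : N₁ ∈ U := h₁.mem hU
  obtain ⟨D, hD⟩ : ∃ D, IsCone (biprod.desc u a) D := exists_isCone _
  obtain ⟨Z, g, hg, ⟨rZ⟩, -⟩ :=
    (hu.lift_desc_snd a).exists_isCone_retracts (by rwa [biprod.lift_fst])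
  obtain ⟨Z', g', hg', -, ⟨rD⟩⟩ :=
    (ha.lift_desc_fst u).exists_isCone_retracts (by rwa [biprod.lift_fst])
  obtain ⟨k, hk⟩ := hg'.rotate
  have hZ' : Z' ∈ U := h₃ k hk (hU.shift_mem _ hP)
  have hD' : D ∈ U :=
    hU.mem_of_retract rD (hU.biprod_mem hZ' (hU.shift_mem _ (hU.biprod_mem hP hN₁)))
  exact h₁ g hg (hU.mem_of_retract rZ (hU.biprod_mem hD' (hU.shift_mem _ hN₁)))

end AbsorbsExtensionsBy

section Thick

variable (S : Set C)

lemma absorbsExtensionsBy_of_addClosure {A : C} (hA : addClosure S A) :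
    AbsorbsExtensionsBy (⋃ n, level S n) A := by
  intro Y B f hf hB
  obtain ⟨b, hb⟩ := Set.mem_iUnion.1 hB
  obtain ⟨u, g, h, hT⟩ := hf.invRotate
  refine Set.mem_iUnion.2 ⟨b + 2, addClosure.of ⟨_, _, u, g, h, hT, ?_, hA⟩⟩
  exact (isAddClosed_level S _).shift_mem _ (level_subset_level_succ S b hb)

lemma absorbsExtensionsBy_of_mem_level :
    ∀ (n : ℕ) {A : C}, A ∈ level S n → AbsorbsExtensionsBy (⋃ n, level S n) A
  | 0, _, hA => absorbsExtensionsBy_of_addClosure S (addClosure_mono (Set.empty_subset S) hA)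
  | 1, _, hA => absorbsExtensionsBy_of_addClosure S hA
  | n + 2, _, hA => by
    have hU := isAddClosed_iUnion_level S
    induction hA with
    | of hE =>
      obtain ⟨X, Y, f, g, h, hT, hX, hY⟩ := hE
      obtain ⟨g', hg'⟩ := IsCone.rotate ⟨g, h, hT⟩
      exact .of_isCone hU hg' (absorbsExtensionsBy_of_addClosure S hY)
        ((absorbsExtensionsBy_of_mem_level (n + 1) hX).shift hU 1)
    | zero hZ => exact absorbsExtensionsBy_of_addClosure S (.zero hZ)
    | iso e _ ih => exact ih.of_iso e
    | shift m _ ih => exact ih.shift hU m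
    | biprod _ _ ihX ihY =>
      exact .of_isCone hU ⟨_, _, binaryBiproductTriangle_distinguished _ _⟩ ihX ihY
    | retract i r hir _ ih => exact ih.of_retract hU ⟨i, r, hir⟩

lemma isThick_iUnion_level : IsThick (⋃ n, level S n) where
  zero _ := (isAddClosed_iUnion_level S).zero_mem
  iso e := (isAddClosed_iUnion_level S).mem_of_iso e
  shift _ n := (isAddClosed_iUnion_level S).shift_mem n
  ext₂ T hT h₁ h₃ := by
    obtain ⟨n, hn⟩ := Set.mem_iUnion.1 h₁
    exact absorbsExtensionsBy_of_mem_level S n hn T.mor₁ ⟨T.mor₂, T.mor₃, hT⟩ h₃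
  retract i r hir := (isAddClosed_iUnion_level S).mem_of_retract ⟨i, r, hir⟩

lemma thickClosure_subset_iUnion_level : thickClosure S ⊆ ⋃ n, level S n :=
  fun _ hX => hX _ (isThick_iUnion_level S) fun _ hY => Set.mem_iUnion.2 ⟨1, .of hY⟩

end Thick

end Paper

open Paper in
theorem statement0 {C : Type u} [Category.{v} C] [Preadditive C] [HasZeroObject C]
    [HasShift C ℤ] [∀ n : ℤ, (shiftFunctor C n).Additive] [Pretriangulated C]
    [HasBinaryBiproducts C] (S : Set C) :
    (∀ n : ℕ, level S n ⊆ level S (n+1)) ∧ (⋃ n : ℕ, level S n) = thickClosure S :=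
  ⟨level_subset_level_succ S,
    (iUnion_level_subset_thickClosure S).antisymm (thickClosure_subset_iUnion_level S)⟩
end

section
/- Let X be a quasi-compact quasi-separated scheme (or algebraic stack) and E a vector bundle with pd(E) ≤ r. Then pd(E^∨) ≤ r, where E^∨ is the dual bundle. -/
open CategoryTheory CategoryTheory.Abelian CategoryTheory.MonoidalCategory

universe w v u

namespace Paper

variable {C : Type u} [Category.{v} C] [Abelian C] [HasExt.{w} C]

/-- `pdLE E r` : the projective dimension of `E`, measured by vanishing of `Ext`-groups
against all (quasi-coherent) objects, is at most `r` :
`Ext^d(E, M) = 0` for all `M` and all `d > r`. -/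
def pdLE (E : C) (r : ℕ) : Prop :=
  ∀ (M : C) (d : ℕ), r < d → Subsingleton (Abelian.Ext E M d)

end Paper

/-!
For a dualizable `Y` with dual `Y'`, `- ⊗ Y` is exact with the exact right adjoint `- ⊗ Y'`;
the adjunction passes to derived categories and gives `Ext^d(X ⊗ Y, M) ≃ Ext^d(X, M ⊗ Y')`,
so tensoring with a vector bundle does not raise `pd`. Thus `pd((E ⊗ E^∨) ⊗ E^∨) ≤ r`, and by
the zigzag identity `E^∨` is a retract of `E^∨ ⊗ E ⊗ E^∨`, which the braiding identifies with
`(E ⊗ E^∨) ⊗ E^∨`. Precomposition with a retraction embeds `Ext(E^∨, M)` into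
`Ext((E ⊗ E^∨) ⊗ E^∨, M)`.
-/

universe w'

namespace CategoryTheory

open Limits

def Adjunction.mapHomologicalComplex {C D : Type*} [Category C] [Category D]
    [Preadditive C] [Preadditive D] {F : C ⥤ D} {G : D ⥤ C} (adj : F ⊣ G)
    [F.Additive] [G.Additive] {ι : Type*} (c : ComplexShape ι) :
    F.mapHomologicalComplex c ⊣ G.mapHomologicalComplex c :=
  Adjunction.mkOfUnitCounit
    { unit := NatTrans.mapHomologicalComplex adj.unit c
      counit := NatTrans.mapHomologicalComplex adj.counit c
      left_triangle := by
        ext K i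
        simp only [Functor.comp_obj, Functor.id_obj, NatTrans.comp_app,
          Functor.associator_hom_app, Category.id_comp, HomologicalComplex.comp_f,
          NatTrans.id_app', HomologicalComplex.id_f]
        exact adj.left_triangle_components (K.X i)
      right_triangle := by
        ext K i
        simp only [Functor.comp_obj, Functor.id_obj, NatTrans.comp_app,
          Functor.associator_inv_app, Category.id_comp, HomologicalComplex.comp_f,
          NatTrans.id_app', HomologicalComplex.id_f]
        exact adj.right_triangle_components (K.X i) }

section ExactAdjunction

variable {C D : Type*} [Category C] [Category D] [Abelian C] [Abelian D]
  {F : C ⥤ D} {G : D ⥤ C} (adj : F ⊣ G)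
  [F.Additive] [PreservesFiniteLimits F] [PreservesFiniteColimits F]
  [G.Additive] [PreservesFiniteLimits G] [PreservesFiniteColimits G]

noncomputable def Adjunction.mapDerivedCategory [HasDerivedCategory C] [HasDerivedCategory D] :
    F.mapDerivedCategory ⊣ G.mapDerivedCategory :=
  letI : CatCommSq (F.mapHomologicalComplex (ComplexShape.up ℤ))
      DerivedCategory.Q DerivedCategory.Q F.mapDerivedCategory :=
    ⟨F.mapDerivedCategoryFactors.symm⟩
  letI : CatCommSq (G.mapHomologicalComplex (ComplexShape.up ℤ))
      DerivedCategory.Q DerivedCategory.Q G.mapDerivedCategory :=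
    ⟨G.mapDerivedCategoryFactors.symm⟩
  (adj.mapHomologicalComplex _).localization DerivedCategory.Q
    (HomologicalComplex.quasiIso C _) DerivedCategory.Q (HomologicalComplex.quasiIso D _) _ _

noncomputable def Adjunction.extEquiv [HasExt.{w} C] [HasExt.{w'} D] (X : C) (Y : D) (n : ℕ) :
    Ext.{w'} (F.obj X) Y n ≃ Ext.{w} X (G.obj Y) n :=
  letI := HasDerivedCategory.standard C
  letI := HasDerivedCategory.standard D
  Ext.homEquiv.trans <|
    (((F.mapDerivedCategorySingleFunctor 0).app X).symm.homCongr (Iso.refl _)).trans <|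
    ((adj.mapDerivedCategory.homEquiv _ _).trans
      (Iso.homCongr (Iso.refl _) ((G.mapDerivedCategory.commShiftIso (n : ℤ)).app _ ≪≫
        (shiftFunctor _ (n : ℤ)).mapIso ((G.mapDerivedCategorySingleFunctor 0).app Y)))).trans
      Ext.homEquiv.symm

end ExactAdjunction

def ExactPairing.retract {C : Type*} [Category C] [MonoidalCategory C] (X Y : C)
    [ExactPairing X Y] : Retract Y (Y ⊗ X ⊗ Y) where
  i := (ρ_ Y).inv ≫ Y ◁ η_ X Y
  r := (α_ Y X Y).inv ≫ ε_ X Y ▷ Y ≫ (λ_ Y).hom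
  retract := by simp

end CategoryTheory

namespace Paper

open Limits

variable {C : Type u} [Category.{v} C] [Abelian C] [HasExt.{w} C]

lemma pdLE_of_retract {A B : C} (h : Retract B A) {r : ℕ} (hA : pdLE A r) : pdLE B r :=
  fun M d hd =>
    have := hA M d hd
    Function.LeftInverse.injective (f := fun z : Ext B M d => (Ext.mk₀ h.r).comp z (zero_add d))
      (g := fun z => (Ext.mk₀ h.i).comp z (zero_add d))
      (fun z => by simp only [Ext.mk₀_comp_mk₀_assoc, h.retract, Ext.mk₀_id_comp])
      |>.subsingleton

lemma pdLE_obj_of_adjunction {D : Type*} [Category D] [Abelian D] [HasExt.{w'} D]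
    {F : C ⥤ D} {G : D ⥤ C} (adj : F ⊣ G)
    [F.Additive] [PreservesFiniteLimits F] [PreservesFiniteColimits F]
    [G.Additive] [PreservesFiniteLimits G] [PreservesFiniteColimits G]
    {X : C} {r : ℕ} (hX : pdLE X r) : pdLE (F.obj X) r :=
  fun M d hd =>
    have := hX (G.obj M) d hd
    (adj.extEquiv X M d).subsingleton

lemma pdLE_tensor_right [MonoidalCategory C] {X : C} (Y Y' : C) [ExactPairing Y Y']
    [ExactPairing Y' Y] {r : ℕ} (hX : pdLE X r) : pdLE (X ⊗ Y) r := by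
  have := (tensorRightAdjunction Y Y').isLeftAdjoint
  have := (tensorRightAdjunction Y Y').isRightAdjoint
  have := (tensorRightAdjunction Y' Y).isLeftAdjoint
  have := (tensorRightAdjunction Y' Y).isRightAdjoint
  have := Functor.additive_of_preserves_binary_products (tensorRight Y)
  have := Functor.additive_of_preserves_binary_products (tensorRight Y')
  exact pdLE_obj_of_adjunction (tensorRightAdjunction Y Y') hX

end Paper

open Paper in
/-- If `E` is a vector bundle (dualizable object) with `pd(E) ≤ r`, then `pd(E^∨) ≤ r`. -/
theorem statement4 {C : Type u} [Category.{v} C] [Abelian C] [HasExt.{w} C]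
    [MonoidalCategory C] [SymmetricCategory C]
    (E : C) [HasRightDual E] (r : ℕ)
    (hE : pdLE E r) : pdLE (Eᘁ) r := by
  let : ExactPairing Eᘁ E := BraidedCategory.exactPairing_swap E Eᘁ
  have hEEE : pdLE ((E ⊗ Eᘁ) ⊗ Eᘁ) r := pdLE_tensor_right Eᘁ E (pdLE_tensor_right Eᘁ E hE)
  exact pdLE_of_retract ((ExactPairing.retract E Eᘁ).trans (β_ Eᘁ (E ⊗ Eᘁ)).retract) hEEE
end
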